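/- Let k be a field, V a finite-dimensional k-vector space, B a symmetric bilinear form on V, and e ∈ V with B(e, e) ≠ 0. Set V_H := {v ∈ V : B(e, v) = 0}, so that V = k·e ⊕ V_H; let E : V → V be the projection onto V_H along e, and for x ∈ End(V) let x_H ∈ End(V_H) be the restriction of E∘x to V_H. Then for every x ∈ End(V) and every t ∈ k such that 1_V − t x is invertible, one has B(e, (1_V − t x)^{−1} e) / B(e, e) = det(1_{V_H} − t x_H) / det(1_V − t x). -/

import Mathlib

/-!
Extend a basis `b₁, …, bₙ` of `V_H` to the basis `e, b₁, …, bₙ` of `V`. In it the `e`-coordinate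
of `v` is `B(e, v) / B(e, e)`, and the matrix of `x_H` is the matrix of `x` with its first row and
column deleted. The left-hand side is therefore the `(0, 0)` entry of the inverse of the matrix
of `1 - t x`, which the adjugate formula expresses as the quotient of determinants.
-/

/-- The projection of `V` onto `V_H = (k·e)^⊥` along `e`. -/
noncomputable def projH {k V : Type*} [Field k] [AddCommGroup V] [Module k V]
    (B : LinearMap.BilinForm k V) (e : V) : V →ₗ[k] V :=
  LinearMap.id - (B e e)⁻¹ • (LinearMap.toSpanSingleton k V e ∘ₗ B e)

theorem projH_mem {k V : Type*} [Field k] [AddCommGroup V] [Module k V]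
    (B : LinearMap.BilinForm k V) (e : V) (he : B e e ≠ 0) (w : V) :
    projH B e w ∈ LinearMap.ker (B e) := by
  simp only [projH, LinearMap.mem_ker, LinearMap.sub_apply, LinearMap.id_apply,
    LinearMap.smul_apply, LinearMap.comp_apply, LinearMap.toSpanSingleton_apply,
    map_sub, map_smul, smul_eq_mul]
  rw [mul_comm (B e w) (B e e), inv_mul_cancel_left₀ he, sub_self]

/-- The compression `x_H = (E ∘ x)|_{V_H}` of `x` to `V_H = (k·e)^⊥`. -/
noncomputable def xH {k V : Type*} [Field k] [AddCommGroup V] [Module k V]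
    (B : LinearMap.BilinForm k V) (e : V) (he : B e e ≠ 0) (x : Module.End k V) :
    Module.End k (LinearMap.ker (B e)) :=
  LinearMap.restrict (projH B e ∘ₗ (x : V →ₗ[k] V))
    (p := LinearMap.ker (B e)) (q := LinearMap.ker (B e))
    (fun w _ => projH_mem B e he (x w))

theorem Matrix.inv_apply_zero_zero {k : Type*} [Field k] {n : ℕ}
    (M : Matrix (Fin (n + 1)) (Fin (n + 1)) k) :
    M⁻¹ 0 0 = (M.submatrix Fin.succ Fin.succ).det / M.det := by
  rw [Matrix.inv_def, Matrix.smul_apply, Matrix.adjugate_fin_succ_eq_det_submatrix,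
    Ring.inverse_eq_inv, smul_eq_mul, div_eq_inv_mul]
  simp [Fin.succAbove_zero]

section Compression

variable {k V : Type*} [Field k] [AddCommGroup V] [Module k V]
  (B : LinearMap.BilinForm k V) (e : V) (he : B e e ≠ 0)

theorem projH_apply (v : V) : projH B e v = v - (B e v / B e e) • e := by
  simp [projH, div_eq_inv_mul, mul_smul]

theorem projH_eq_self {w : V} (hw : w ∈ LinearMap.ker (B e)) : projH B e w = w := by
  rw [projH_apply, LinearMap.mem_ker.mp hw, zero_div, zero_smul, sub_zero]

theorem coe_xH_apply (y : Module.End k V) (w : LinearMap.ker (B e)) :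
    (xH B e he y w : V) = projH B e (y w) :=
  rfl

theorem xH_one_sub_smul (x : Module.End k V) (t : k) :
    xH B e he (1 - t • x) = 1 - t • xH B e he x := by
  ext w
  simp only [coe_xH_apply, LinearMap.sub_apply, Module.End.one_apply, LinearMap.smul_apply,
    Submodule.coe_sub, Submodule.coe_smul, map_sub, map_smul, projH_eq_self B e w.2]

noncomputable def basisConsKer {n : ℕ} (bK : Module.Basis (Fin n) k (LinearMap.ker (B e))) :
    Module.Basis (Fin (n + 1)) k V :=
  Module.Basis.mkFinCons e bK
    (fun c w hw h => by
      have h0 : B e (c • e + w) = 0 := by rw [h, map_zero]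
      rw [map_add, map_smul, LinearMap.mem_ker.mp hw, add_zero, smul_eq_mul] at h0
      exact (mul_eq_zero.mp h0).resolve_right he)
    (fun v => ⟨-(B e v / B e e), by
      simpa [projH_apply, sub_eq_add_neg, neg_smul] using projH_mem B e he v⟩)

variable {n : ℕ} (bK : Module.Basis (Fin n) k (LinearMap.ker (B e)))

theorem coe_basisConsKer : ⇑(basisConsKer B e he bK) = Fin.cons e ((↑) ∘ bK) :=
  Module.Basis.coe_mkFinCons _ _ _ _

theorem basisConsKer_repr (v : V) :
    ⇑((basisConsKer B e he bK).repr v) =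
      Fin.cons (B e v / B e e) (bK.repr ⟨projH B e v, projH_mem B e he v⟩) := by
  set p : LinearMap.ker (B e) := ⟨projH B e v, projH_mem B e he v⟩
  suffices hv : v = ∑ j, (Fin.cons (B e v / B e e) (bK.repr p) : Fin (n + 1) → k) j •
      basisConsKer B e he bK j by
    conv_lhs => rw [hv]
    exact (basisConsKer B e he bK).repr_sum_self _
  have hp : ∑ i, bK.repr p i • (bK i : V) = v - (B e v / B e e) • e := by
    rw [← projH_apply]
    simpa only [Submodule.coe_sum, Submodule.coe_smul] using congrArg Subtype.val (bK.sum_repr p)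
  rw [Fin.sum_univ_succ, coe_basisConsKer]
  simp only [Fin.cons_zero, Fin.cons_succ, Function.comp_apply, hp]
  abel

theorem toMatrix_xH (y : Module.End k V) :
    LinearMap.toMatrix bK bK (xH B e he y) =
      (LinearMap.toMatrix (basisConsKer B e he bK) (basisConsKer B e he bK) y).submatrix
        Fin.succ Fin.succ := by
  ext i j
  rw [Matrix.submatrix_apply, LinearMap.toMatrix_apply, LinearMap.toMatrix_apply,
    basisConsKer_repr, coe_basisConsKer]
  rfl

theorem apply_ringInverse_div_eq_det_xH_div_det [FiniteDimensional k V] {y : Module.End k V}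
    (hy : IsUnit y) :
    B e (Ring.inverse y e) / B e e = LinearMap.det (xH B e he y) / LinearMap.det y := by
  set b := basisConsKer B e he (Module.finBasis k (LinearMap.ker (B e)))
  have hb0 : b 0 = e := by rw [coe_basisConsKer]; rfl
  have hinv : LinearMap.toMatrix b b (Ring.inverse y) = (LinearMap.toMatrix b b y)⁻¹ := by
    refine (Matrix.inv_eq_right_inv ?_).symm
    rw [← LinearMap.toMatrix_mul, Ring.mul_inverse_cancel y hy, LinearMap.toMatrix_one]
  calc B e (Ring.inverse y e) / B e e = LinearMap.toMatrix b b (Ring.inverse y) 0 0 := by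
        rw [LinearMap.toMatrix_apply, hb0, basisConsKer_repr, Fin.cons_zero]
    _ = LinearMap.det (xH B e he y) / LinearMap.det y := by
        rw [hinv, Matrix.inv_apply_zero_zero, ← toMatrix_xH, LinearMap.det_toMatrix,
          LinearMap.det_toMatrix]

end Compression

theorem statement11 (k V : Type*) [Field k] [AddCommGroup V] [Module k V]
    [FiniteDimensional k V]
    (B : LinearMap.BilinForm k V)
    (e : V) (he : B e e ≠ 0)
    (x : Module.End k V) (t : k) (hinv : IsUnit (1 - t • x)) :
    B e (Ring.inverse (1 - t • x) e) / B e e =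
      LinearMap.det ((1 : Module.End k (LinearMap.ker (B e))) - t • xH B e he x) /
        LinearMap.det ((1 : Module.End k V) - t • x) := by
  rw [← xH_one_sub_smul, apply_ringInverse_div_eq_det_xH_div_det B e he hinv]
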